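/- For coprime positive integers M, N, κ = N/M, and q = e^{2πiκ}, the M×M clock matrix C (eigenvalues e^{2πijN/M}) and shift matrix S satisfying CS = qSC yield operators J₃ with q^{±J₃} := C^{±1} and J_± := (D(±e₁±e₂) - D(∓e₁±e₂))/(q - q⁻¹) where D(m) = q^{-m₁m₂/2}C^{m₁}S^{m₂}, which satisfy the U_q(sl₂) relation [J₊, J₋] = (q^{2J₃} - q^{-2J₃})/(q - q⁻¹), i.e., (q-q⁻¹)²[J₊,J₋] = (q-q⁻¹)(C² - C⁻²). -/

import Mathlib

noncomputable section

open scoped Real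
open Matrix

/-- The clock matrix `C = diag(1, q, …, q^{M-1})`. -/
def clockM (M : ℕ) (q : ℂ) : Matrix (Fin M) (Fin M) ℂ :=
  Matrix.diagonal (fun j => q ^ (j : ℕ))

/-- The shift matrix `S`, the cyclic permutation sending `e_j` to `e_{j+1 mod M}`. -/
def shiftM (M : ℕ) : Matrix (Fin M) (Fin M) ℂ :=
  Matrix.of fun i j => if (i : ℕ) = ((j : ℕ) + 1) % M then 1 else 0

/-- The magnetic translation `D(m₁,m₂) = q^{-m₁m₂/2} C^{m₁} S^{m₂}` with
`q^{-m₁m₂/2} := e^{-πiκ m₁m₂}`, `κ = N/M`. -/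
def Dop (M N : ℕ) (m₁ m₂ : ℤ) : Matrix (Fin M) (Fin M) ℂ :=
  Complex.exp (-(π * Complex.I * ((N : ℝ) / (M : ℝ)) * m₁ * m₂)) •
    (clockM M (Complex.exp (2 * π * Complex.I * N / M)) ^ m₁ * shiftM M ^ m₂)

/-!
Write `D(±1, m) = e^{∓πiκm} C^{±1} S^m` and move every `C^{±1}` to the left of every `S^{±1}`
using `S C^{±1} = q^{∓1} C^{±1} S` and `S⁻¹ C^{±1} = q^{±1} C^{±1} S⁻¹`. The products
`D(m) D(-m)` become the same scalar in either order and cancel in the commutator, while the four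
cross terms give `q^{±1} C^{±2}`; the phases survive only as `e^{-πiκ} e^{πiκ} = 1`. The relation
`C S = q S C` itself holds because `q^M = 1`, and `S` is invertible as the permutation matrix of
the cyclic rotation of `Fin M`.
-/

section CommutationRelation

variable {k R : Type*} [Field k] [Ring R] [Algebra k R] {c d q : k}

theorem Units.mul_inv_eq_smul_inv_mul {x y : Rˣ} (hc : c ≠ 0) (h : (y * x : R) = c • (x * y)) :
    (y * ↑x⁻¹ : R) = c⁻¹ • (↑x⁻¹ * y) := by
  have : (↑x⁻¹ * y : R) = c • (y * ↑x⁻¹) :=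
    calc (↑x⁻¹ * y : R) = ↑x⁻¹ * (y * x) * ↑x⁻¹ := by simp [mul_assoc]
      _ = c • (y * ↑x⁻¹) := by rw [h]; simp
  rw [this, smul_smul, inv_mul_cancel₀ hc, one_smul]

theorem Units.inv_mul_eq_smul_mul_inv {x y : Rˣ} (hc : c ≠ 0) (h : (y * x : R) = c • (x * y)) :
    (↑y⁻¹ * x : R) = c⁻¹ • (x * ↑y⁻¹) := by
  have : (x * ↑y⁻¹ : R) = c • (↑y⁻¹ * x) :=
    calc (x * ↑y⁻¹ : R) = ↑y⁻¹ * (y * x) * ↑y⁻¹ := by simp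
      _ = c • (↑y⁻¹ * x) := by rw [h]; simp [mul_assoc]
  rw [this, smul_smul, inv_mul_cancel₀ hc, one_smul]

theorem mul_mul_eq_smul_of_mul_eq_smul {x y : R} (h : y * x = c • (x * y)) (z : R) :
    y * (x * z) = c • (x * (y * z)) := by
  rw [← mul_assoc, h, smul_mul_assoc, mul_assoc]

theorem lightCone_commutator_eq {C S : Rˣ} (hq : q ≠ 0) (hCS : (C * S : R) = q • (S * C))
    (α β : k) :
    (α • (C * S : R) - β • (↑C⁻¹ * S)) * (α • (↑C⁻¹ * ↑S⁻¹) - β • (C * ↑S⁻¹)) -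
      (α • (↑C⁻¹ * ↑S⁻¹) - β • (C * ↑S⁻¹)) * (α • (C * S : R) - β • (↑C⁻¹ * S)) =
      (α * β * (q - q⁻¹)) • ((C : R) ^ 2 - ↑C⁻¹ ^ 2) := by
  have hSC : (S * C : R) = q⁻¹ • (C * S) := by
    rw [hCS, smul_smul, inv_mul_cancel₀ hq, one_smul]
  have hSCi := Units.mul_inv_eq_smul_inv_mul (inv_ne_zero hq) hSC
  have hSiC := Units.inv_mul_eq_smul_mul_inv (inv_ne_zero hq) hSC
  have hSiCi := Units.mul_inv_eq_smul_inv_mul (inv_ne_zero (inv_ne_zero hq)) hSiC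
  rw [inv_inv] at hSCi hSiC hSiCi
  -- normal ordering: move each `C^{±1}` left past `S^{±1}`
  simp only [mul_sub, sub_mul, smul_mul_assoc, mul_smul_comm, mul_assoc,
    mul_mul_eq_smul_of_mul_eq_smul hSC, mul_mul_eq_smul_of_mul_eq_smul hSCi,
    mul_mul_eq_smul_of_mul_eq_smul hSiC, mul_mul_eq_smul_of_mul_eq_smul hSiCi,
    Units.mul_inv, Units.inv_mul, smul_smul, mul_one, sq]
  module

theorem sq_smul_commutator_inv_smul {A B X : R} (h : A * B - B * A = d • X) :
    d ^ 2 • ((d⁻¹ • A) * (d⁻¹ • B) - (d⁻¹ • B) * (d⁻¹ • A)) = d • X := by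
  rcases eq_or_ne d 0 with rfl | hd
  · simp
  rw [smul_mul_smul_comm, smul_mul_smul_comm, ← smul_sub, h, smul_smul, smul_smul]
  congr 1
  field_simp

end CommutationRelation

theorem shiftM_eq_permMatrix (M : ℕ) : shiftM M = (finRotate M)⁻¹.permMatrix ℂ := by
  ext i j
  obtain _ | n := M
  · exact j.elim0
  have hsucc : (i : ℕ) = (j + 1) % (n + 1) ↔ i = j + 1 := by
    rw [Fin.ext_iff, Fin.val_add, Fin.val_one', Nat.add_mod_mod]
  simp [shiftM, PEquiv.toMatrix_apply, Equiv.Perm.inv_def, sub_eq_iff_eq_add, hsucc]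

theorem isUnit_shiftM (M : ℕ) : IsUnit (shiftM M) :=
  shiftM_eq_permMatrix M ▸ (Group.isUnit (finRotate M)).map Matrix.permMatrixHom

theorem isUnit_clockM (M : ℕ) {q : ℂ} (hq : q ≠ 0) : IsUnit (clockM M q) :=
  Matrix.isUnit_diagonal.mpr (Pi.isUnit_iff.mpr fun _ => hq.isUnit.pow _)

theorem clockM_mul_shiftM {M : ℕ} {q : ℂ} (hqM : q ^ M = 1) :
    clockM M q * shiftM M = q • (shiftM M * clockM M q) := by
  ext i j
  simp only [clockM, shiftM, Matrix.diagonal_mul, Matrix.mul_diagonal, Matrix.smul_apply,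
    Matrix.of_apply, smul_eq_mul]
  split_ifs with h
  · have hmod : q ^ ((j + 1 : ℕ) % M) = q ^ (j + 1 : ℕ) := by
      conv_rhs => rw [← Nat.mod_add_div (j + 1) M, pow_add, pow_mul, hqM, one_pow, mul_one]
    rw [h, hmod, pow_succ]
    ring
  · simp

theorem Complex.exp_two_pi_mul_I_mul_div_pow_eq_one (N M : ℕ) :
    Complex.exp (2 * π * Complex.I * N / M) ^ M = 1 := by
  rcases eq_or_ne M 0 with rfl | hM
  · simp
  rw [← Complex.exp_nat_mul, ← Complex.exp_nat_mul_two_pi_mul_I N]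
  congr 1
  field_simp

theorem Uq_sl2_from_magnetic_translations_general
    (M N : ℕ) (q : ℂ) (hq : q = Complex.exp (2 * π * Complex.I * N / M))
    (Jp Jm : Matrix (Fin M) (Fin M) ℂ)
    (hJp : Jp = (q - q⁻¹)⁻¹ • (Dop M N 1 1 - Dop M N (-1) 1))
    (hJm : Jm = (q - q⁻¹)⁻¹ • (Dop M N (-1) (-1) - Dop M N 1 (-1))) :
    ((q - q⁻¹) ^ 2) • (Jp * Jm - Jm * Jp)
      = (q - q⁻¹) • (clockM M q ^ (2 : ℤ) - clockM M q ^ (-2 : ℤ)) := by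
  have hq0 : q ≠ 0 := hq ▸ Complex.exp_ne_zero _
  obtain ⟨C, hC⟩ := isUnit_clockM M hq0
  obtain ⟨S, hS⟩ := isUnit_shiftM M
  have hCS : (C * S : Matrix (Fin M) (Fin M) ℂ) = q • (S * C) := by
    rw [hC, hS]
    exact clockM_mul_shiftM (hq ▸ Complex.exp_two_pi_mul_I_mul_div_pow_eq_one N M)
  set x : ℂ := π * Complex.I * ((N : ℝ) / (M : ℝ))
  have hD (m₁ m₂ : ℤ) : Dop M N m₁ m₂ = Complex.exp (-(x * m₁ * m₂)) • ↑(C ^ m₁ * S ^ m₂) := by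
    rw [Dop, ← hq, ← hC, ← hS, Units.val_mul, Matrix.coe_units_zpow, Matrix.coe_units_zpow]
  have hcomm := lightCone_commutator_eq hq0 hCS (Complex.exp (-x)) (Complex.exp x)
  rw [← Complex.exp_add, neg_add_cancel, Complex.exp_zero, one_mul] at hcomm
  rw [hJp, hJm, ← hC, ← Matrix.coe_units_zpow, ← Matrix.coe_units_zpow, _root_.zpow_neg,
    zpow_ofNat, ← inv_pow]
  simp only [hD, zpow_one, _root_.zpow_neg_one, Int.cast_one, Int.cast_neg, mul_one, mul_neg,
    neg_neg, Units.val_mul, Units.val_pow_eq_pow_val]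
  exact sq_smul_commutator_inv_smul hcomm

/-- For `κ = N/M` with `gcd(M,N)=1`, `q = e^{2πiκ}`, the light-cone combinations
`J₊ = (D(1,1)-D(-1,1))/(q-q⁻¹)`, `J₋ = (D(-1,-1)-D(1,-1))/(q-q⁻¹)` of magnetic translations
satisfy the `U_q(sl₂)` relation `(q-q⁻¹)²[J₊,J₋] = (q-q⁻¹)(C² - C⁻²)`. -/
theorem Uq_sl2_from_magnetic_translations
    (M N : ℕ) (hM : 1 < M) (hN : 0 < N) (hMN : Nat.Coprime M N)
    (q : ℂ) (hq : q = Complex.exp (2 * π * Complex.I * N / M))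
    (Jp Jm : Matrix (Fin M) (Fin M) ℂ)
    (hJp : Jp = (q - q⁻¹)⁻¹ • (Dop M N 1 1 - Dop M N (-1) 1))
    (hJm : Jm = (q - q⁻¹)⁻¹ • (Dop M N (-1) (-1) - Dop M N 1 (-1))) :
    ((q - q⁻¹) ^ 2) • (Jp * Jm - Jm * Jp)
      = (q - q⁻¹) • (clockM M q ^ (2 : ℤ) - clockM M q ^ (-2 : ℤ)) :=
  Uq_sl2_from_magnetic_translations_general M N q hq Jp Jm hJp hJm
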